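/- arXiv:1912.00525 — 2 statements merged into one kernel-verified Lean document; each statement's English description precedes it below -/
import Mathlib

section
/- The coefficients A_ℓ(N,M) satisfy the three-term recursion (ℓ+2) A_{ℓ+1}(N,M) = (2ℓ+1)(N+M) A_ℓ(N,M) + (ℓ-1)(ℓ² - (M-N)²) A_{ℓ-1}(N,M) for all ℓ ≥ 1, with initial data A_0(N,M) = N and A_1(N,M) = N·M. -/
/-!
Creative telescoping. For `ℓ ≥ 2`, each of `(ℓ+1) A_{ℓ+1}`, `ℓ A_ℓ` and `(ℓ-1) A_{ℓ-1}` is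
a sum over `0 ≤ j ≤ ℓ` of one hypergeometric kernel `k(j)` times a polynomial in `j`, so the
recursion says `∑_j k(j) P(j) = 0` for an explicit polynomial `P`. Zeilberger's algorithm
produces a polynomial `Q` with `k(j) P(j) = k(j+1) Q(j+1) - k(j) Q(j)`, `Q(0) = 0` and
`P(ℓ) + Q(ℓ) = 0`, so the sum telescopes to zero. The case `ℓ = 1` is a direct computation.
-/

open Finset

/-- Rising factorial (Pochhammer symbol) `(x)_n = x(x+1)⋯(x+n-1)`. -/
noncomputable def poch (x : ℝ) (n : ℕ) : ℝ := (ascPochhammer ℝ n).eval x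

/-- The LUE one-point coefficients `A_ℓ(N,M)`:
`A_0 = N`, and for `ℓ ≥ 1`,
`A_ℓ(N,M) = (1/ℓ) ∑_{j=0}^{ℓ-1} (-1)^j (N-j)_ℓ (M-j)_ℓ / (j!(ℓ-1-j)!)`. -/
noncomputable def A (N M : ℝ) : ℕ → ℝ
  | 0 => N
  | (ℓ + 1) => (1 / ((ℓ : ℝ) + 1)) * ∑ j ∈ range (ℓ + 1),
      (-1 : ℝ) ^ j * poch (N - j) (ℓ + 1) * poch (M - j) (ℓ + 1) /
        ((j.factorial : ℝ) * ((ℓ - j).factorial : ℝ))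

theorem poch_succ_right (x : ℝ) (n : ℕ) : poch x (n + 1) = poch x n * (x + n) :=
  ascPochhammer_succ_eval n x

theorem poch_succ_left (x : ℝ) (n : ℕ) : poch x (n + 1) = x * poch (x + 1) n := by
  simp [poch, ascPochhammer_succ_left, Polynomial.eval_comp]

theorem cast_factorial_succ_sub {R : Type*} [CommRing R] {m j : ℕ} (hj : j ≤ m) :
    ((m + 1 - j).factorial : R) = ((m : R) + 1 - j) * (m - j).factorial := by
  rw [Nat.succ_sub hj, Nat.factorial_succ, Nat.cast_mul, Nat.cast_succ, Nat.cast_sub hj]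
  ring

theorem cast_factorial_add_two_sub {R : Type*} [CommRing R] {n j : ℕ} (hj : j ≤ n + 1) :
    ((n + 2 - j).factorial : R) = ((n : R) + 2 - j) * (n + 1 - j).factorial := by
  rw [show n + 2 - j = n + 1 + 1 - j from rfl, cast_factorial_succ_sub hj]
  push_cast
  ring

theorem succ_mul_A_succ (N M : ℝ) (m : ℕ) :
    ((m : ℝ) + 1) * A N M (m + 1) = ∑ j ∈ range (m + 1),
      (-1 : ℝ) ^ j * poch (N - j) (m + 1) * poch (M - j) (m + 1) /
        ((j.factorial : ℝ) * ((m - j).factorial : ℝ)) := by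
  rw [A, ← mul_assoc, mul_one_div_cancel (by positivity), one_mul]

section Certificate

variable {R : Type*} [CommRing R]

/-- `ℓ (ℓ + 1)` times the recursion at `l = ℓ`, as the factor multiplying the kernel at
`x = j`. -/
def recurrencePoly (N M l x : R) : R :=
  l * (l + 2) * ((N - x + l - 1) * (N - x + l) * (M - x + l - 1) * (M - x + l))
  - (l + 1) * (2 * l + 1) * (N + M) * ((N - x + l - 1) * (M - x + l - 1) * (l - x))
  - (l + 1) * l * (l ^ 2 - (M - N) ^ 2) * ((l - x) * (l - 1 - x))

/-- Zeilberger's certificate for `recurrencePoly`. -/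
def certificate (N M l x : R) : R :=
  (l^2 - 3*l^4 + 2*l^5 - M*l + M*l^2 - 2*M*l^3 + 2*M*l^4 + M^2*l - M^2*l^2 - N*l + N*l^2
    - 2*N*l^3 + 2*N*l^4 - 2*N*M + 5*N*M*l - N*M*l^2 + N*M*l^3 + 2*N*M^2 - 2*N*M^2*l
    - N*M^2*l^2 + N^2*l - N^2*l^2 + 2*N^2*M - 2*N^2*M*l - N^2*M*l^2 - 2*N^2*M^2
    - N^2*M^2*l) * x
  + (-l + l^2 + 7*l^3 - 7*l^4 + M - 3*M*l + 4*M*l^2 - 5*M*l^3 - M^2 + 2*M^2*l + N - 3*N*l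
    + 4*N*l^2 - 5*N*l^3 - 6*N*M + 5*N*M*l - N*M*l^2 + 3*N*M^2 + N*M^2*l - N^2 + 2*N^2*l
    + 3*N^2*M + N^2*M*l) * x^2
  + (-l - 5*l^2 + 9*l^3 + 2*M - 3*M*l + 4*M*l^2 - M^2 + 2*N - 3*N*l + 4*N*l^2 - 4*N*M
    - N^2) * x^3
  + (l - 5*l^2 + M - M*l + N - N*l) * x^4 + l * x^5

theorem certificate_zero (N M l : R) : certificate N M l 0 = 0 := by
  simp only [certificate]; ring

theorem recurrencePoly_add_certificate_self (N M l : R) :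
    recurrencePoly N M l l + certificate N M l l = 0 := by
  simp only [recurrencePoly, certificate]; ring

/-- The telescoping relation with the kernel ratio
`k(x+1) / k(x) = -(N-x-1)(M-x-1)(l-x) / ((x+1)(N-x+l-2)(M-x+l-2))` cleared of denominators. -/
theorem recurrencePoly_certificate_telescope (N M l x : R) :
    (N - x + l - 2) * (M - x + l - 2) * (x + 1) * (recurrencePoly N M l x + certificate N M l x)
      + (N - x - 1) * (M - x - 1) * (l - x) * certificate N M l (x + 1) = 0 := by
  simp only [recurrencePoly, certificate]; ring

end Certificate

/-- `k(j) = (-1)^j (N-j)_{ℓ-1} (M-j)_{ℓ-1} / (j! (ℓ-j)!)` at level `ℓ = n + 2`. -/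
noncomputable def A_kernel (N M : ℝ) (n j : ℕ) : ℝ :=
  (-1) ^ j * poch (N - j) (n + 1) * poch (M - j) (n + 1) /
    ((j.factorial : ℝ) * ((n + 2 - j).factorial : ℝ))

theorem A_kernel_mul_recurrencePoly_add_certificate (N M : ℝ) {n j : ℕ} (hj : j ≤ n + 1) :
    A_kernel N M n j * (recurrencePoly N M ((n : ℝ) + 2) j + certificate N M ((n : ℝ) + 2) j)
      = A_kernel N M n (j + 1) * certificate N M ((n : ℝ) + 2) ((j : ℝ) + 1) := by
  -- `k(j)` and `k(j+1)` are both multiples of `B`, which avoids dividing by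
  -- `(N - j + n) (M - j + n)`, a factor that may vanish.
  set B := (-1) ^ j * poch (N - j) n * poch (M - j) n /
    ((j.factorial : ℝ) * ((n + 1 - j).factorial : ℝ)) with hB
  have hjR : (j : ℝ) ≤ n + 1 := by exact_mod_cast hj
  have hl : (n : ℝ) + 2 - j ≠ 0 := by linarith
  have h0 : A_kernel N M n j * ((n : ℝ) + 2 - j) = B * ((N - j + n) * (M - j + n)) := by
    rw [A_kernel, cast_factorial_add_two_sub hj, poch_succ_right, poch_succ_right, hB]
    field_simp
  have h1 : A_kernel N M n (j + 1) * ((j : ℝ) + 1) = -(B * ((N - j - 1) * (M - j - 1))) := by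
    have hN : N - (j + 1 : ℕ) + 1 = N - j := by push_cast; ring
    have hM : M - (j + 1 : ℕ) + 1 = M - j := by push_cast; ring
    rw [A_kernel, poch_succ_left, poch_succ_left, hN, hM,
      show n + 2 - (j + 1) = n + 1 - j by omega, Nat.factorial_succ, pow_succ, hB]
    push_cast
    field_simp
    ring
  have hne : ((n : ℝ) + 2 - j) * ((j : ℝ) + 1) ≠ 0 := mul_ne_zero hl (by positivity)
  apply mul_right_cancel₀ hne
  set l : ℝ := (n : ℝ) + 2
  linear_combination ((j : ℝ) + 1) * (recurrencePoly N M l j + certificate N M l j) * h0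
    - (l - j) * certificate N M l ((j : ℝ) + 1) * h1
    + B * recurrencePoly_certificate_telescope N M l j

theorem sum_A_kernel_mul_recurrencePoly (N M : ℝ) (n : ℕ) :
    ∑ j ∈ range (n + 3), A_kernel N M n j * recurrencePoly N M ((n : ℝ) + 2) j = 0 := by
  set G : ℕ → ℝ := fun j ↦ A_kernel N M n j * certificate N M ((n : ℝ) + 2) j
  have hstep : ∀ j ∈ range (n + 2),
      A_kernel N M n j * recurrencePoly N M ((n : ℝ) + 2) j = G (j + 1) - G j := by
    intro j hj
    have h := A_kernel_mul_recurrencePoly_add_certificate N M (mem_range_succ_iff.mp hj)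
    simp only [G]
    push_cast
    linear_combination h
  rw [sum_range_succ, sum_congr rfl hstep, sum_range_sub]
  simp only [G, Nat.cast_zero, certificate_zero, mul_zero, sub_zero]
  push_cast
  linear_combination
    A_kernel N M n (n + 2) * recurrencePoly_add_certificate_self N M ((n : ℝ) + 2)

theorem add_three_mul_A_eq_sum_A_kernel (N M : ℝ) (n : ℕ) :
    ((n : ℝ) + 3) * A N M (n + 3) = ∑ j ∈ range (n + 3),
      A_kernel N M n j *
        ((N - j + n + 1) * (N - j + n + 2) * (M - j + n + 1) * (M - j + n + 2)) := by
  have h := succ_mul_A_succ N M (n + 2)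
  rw [show ((n + 2 : ℕ) : ℝ) + 1 = n + 3 by push_cast; ring] at h
  rw [h]
  refine sum_congr rfl fun j _ ↦ ?_
  rw [A_kernel, poch_succ_right _ (n + 2), poch_succ_right _ (n + 1),
    poch_succ_right _ (n + 2), poch_succ_right _ (n + 1)]
  push_cast
  ring

theorem add_two_mul_A_eq_sum_A_kernel (N M : ℝ) (n : ℕ) :
    ((n : ℝ) + 2) * A N M (n + 2) = ∑ j ∈ range (n + 3),
      A_kernel N M n j * ((N - j + n + 1) * (M - j + n + 1) * (n + 2 - j)) := by
  have h := succ_mul_A_succ N M (n + 1)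
  rw [show ((n + 1 : ℕ) : ℝ) + 1 = n + 2 by push_cast; ring] at h
  have hlast : (n : ℝ) + 2 - ((n + 2 : ℕ) : ℝ) = 0 := by push_cast; ring
  rw [h, sum_range_succ _ (n + 2), hlast, mul_zero, mul_zero, add_zero]
  refine sum_congr rfl fun j hj ↦ ?_
  have hj : j ≤ n + 1 := mem_range_succ_iff.mp hj
  have hl : (n : ℝ) + 2 - j ≠ 0 := by
    have : (j : ℝ) ≤ n + 1 := by exact_mod_cast hj
    linarith
  rw [A_kernel, cast_factorial_add_two_sub hj, poch_succ_right _ (n + 1), poch_succ_right _ (n + 1)]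
  push_cast
  field_simp
  ring

theorem add_one_mul_A_eq_sum_A_kernel (N M : ℝ) (n : ℕ) :
    ((n : ℝ) + 1) * A N M (n + 1) = ∑ j ∈ range (n + 3),
      A_kernel N M n j * ((n + 2 - j) * (n + 1 - j)) := by
  rw [succ_mul_A_succ, sum_range_succ _ (n + 2), sum_range_succ _ (n + 1)]
  push_cast
  rw [show (n : ℝ) + 2 - (n + 2) = 0 by ring, show (n : ℝ) + 1 - (n + 1) = 0 by ring]
  simp only [mul_zero, zero_mul, add_zero]
  refine sum_congr rfl fun j hj ↦ ?_
  have hj : j ≤ n := mem_range_succ_iff.mp hj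
  have hjR : (j : ℝ) ≤ n := by exact_mod_cast hj
  have hl : (n : ℝ) + 2 - j ≠ 0 := by linarith
  have hl' : (n : ℝ) + 1 - j ≠ 0 := by linarith
  rw [A_kernel, cast_factorial_add_two_sub (by omega), cast_factorial_succ_sub hj]
  field_simp

theorem sum_A_kernel_mul_recurrencePoly_eq (N M : ℝ) (n : ℕ) :
    ∑ j ∈ range (n + 3), A_kernel N M n j * recurrencePoly N M ((n : ℝ) + 2) j
      = ((n : ℝ) + 2) * (n + 4) * (((n : ℝ) + 3) * A N M (n + 3))
        - ((n : ℝ) + 3) * (2 * n + 5) * (N + M) * (((n : ℝ) + 2) * A N M (n + 2))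
        - ((n : ℝ) + 3) * (n + 2) * ((n + 2) ^ 2 - (M - N) ^ 2)
          * (((n : ℝ) + 1) * A N M (n + 1)) := by
  rw [add_three_mul_A_eq_sum_A_kernel, add_two_mul_A_eq_sum_A_kernel,
    add_one_mul_A_eq_sum_A_kernel]
  simp only [mul_sum, ← sum_sub_distrib]
  refine sum_congr rfl fun j _ ↦ ?_
  simp only [recurrencePoly]
  ring

theorem A_three_term_recursion (N M : ℝ) :
    A N M 0 = N ∧ A N M 1 = N * M ∧
    ∀ ℓ : ℕ, 1 ≤ ℓ →
      ((ℓ : ℝ) + 2) * A N M (ℓ + 1)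
        = (2 * (ℓ : ℝ) + 1) * (N + M) * A N M ℓ
          + ((ℓ : ℝ) - 1) * ((ℓ : ℝ) ^ 2 - (M - N) ^ 2) * A N M (ℓ - 1) := by
  refine ⟨rfl, by simp [A, poch], fun ℓ hℓ ↦ ?_⟩
  obtain rfl | ⟨n, rfl⟩ : ℓ = 1 ∨ ∃ n, ℓ = n + 2 := by
    rcases Nat.lt_or_ge ℓ 2 with h | h
    exacts [Or.inl (by omega), Or.inr ⟨ℓ - 2, by omega⟩]
  · simp [A, sum_range_succ, poch, ascPochhammer_succ_right]
    ring
  · have h := sum_A_kernel_mul_recurrencePoly_eq N M n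
    rw [sum_A_kernel_mul_recurrencePoly] at h
    apply mul_left_cancel₀ (by positivity : ((n : ℝ) + 2) * (n + 3) ≠ 0)
    push_cast
    linear_combination -h
end

section
/- Similarly, the coefficient of N^ℓ in B_ℓ(N, cN) (as a polynomial in N with coefficients in ℚ[c]) equals ∑_{b=0}^{ℓ} C(ℓ,b)² c^b. -/
open Finset Polynomial
open scoped Nat

/-!
By Taylor's formula the coefficient of `N^a` in `P(rN - y)` is `r^a (D⁽ᵃ⁾P)(-y)`, with `D⁽ᵃ⁾` the
`a`-th Hasse derivative. So the coefficient of `N^n` in `B_P(N, cN) = ∑_j w_j P(N - j) P(cN - j)`,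
`w_j = (-1)^j / (j! (n-j)!)`, is `∑_{a+b=n} c^b ∑_j w_j Q_{a,b}(-j)` with
`Q_{a,b} = D⁽ᵃ⁾P · D⁽ᵇ⁾P`. The inner sum is `(-1)^n / n!` times the `n`-th forward difference of
`y ↦ Q_{a,b}(-y)` at `0`; as `Q_{a,b}` has degree at most `n`, it is the `y^n`-coefficient of
`Q_{a,b}`, namely `C(n,a) C(n,b) lc(P)^2`. For `P = (x)_ℓ` the leading coefficient is `1`.
-/

/-- `B_ℓ(N, cN)` as a polynomial in `N` with coefficients in `ℚ[c]`
(outer variable `X` is `N`, inner variable is `c`):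
`B_ℓ(N,M) = ∑_{j=0}^{ℓ} (-1)^j (N-j)_ℓ (M-j)_ℓ / (j!(ℓ-j)!)` with `M = cN`. -/
noncomputable def BPoly (ℓ : ℕ) : Polynomial (Polynomial ℚ) :=
  ∑ j ∈ range (ℓ + 1),
    C (C ((-1 : ℚ) ^ j / ((j.factorial : ℚ) * ((ℓ - j).factorial : ℚ)))) *
      (ascPochhammer (Polynomial (Polynomial ℚ)) ℓ).eval (X - C (C (j : ℚ))) *
      (ascPochhammer (Polynomial (Polynomial ℚ)) ℓ).eval
        (C (Polynomial.X : Polynomial ℚ) * X - C (C (j : ℚ)))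

namespace Polynomial

theorem sum_range_neg_one_pow_mul_choose_mul_eval {R : Type*} [CommRing R] {P : R[X]} {n : ℕ}
    (hP : P.natDegree ≤ n) :
    ∑ k ∈ range (n + 1), (-1 : R) ^ (n - k) * n.choose k * P.eval (k : R) = n ! * P.coeff n := by
  have h := fwdDiff_iter_eq_sum_shift (h := (1 : R)) P.eval n 0
  simp only [zero_add, nsmul_eq_mul, mul_one, zsmul_eq_mul, Int.cast_mul, Int.cast_pow,
    Int.cast_neg, Int.cast_one, Int.cast_natCast] at h
  rw [← h]
  rcases hP.lt_or_eq with hlt | rfl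
  · rw [fwdDiff_iter_eq_zero_of_degree_lt hlt, coeff_eq_zero_of_natDegree_lt hlt]
    simp
  · rw [fwdDiff_iter_degree_eq_factorial, Pi.smul_apply, Pi.natCast_apply, smul_eq_mul, mul_comm,
      leadingCoeff]

theorem sum_range_neg_one_pow_div_factorial_mul_eval_neg {K : Type*} [Field K] [CharZero K]
    {P : K[X]} {n : ℕ} (hP : P.natDegree ≤ n) :
    ∑ j ∈ range (n + 1), (-1 : K) ^ j / (j ! * (n - j)!) * P.eval (-(j : K)) = P.coeff n := by
  have hQ : (P.comp (C (-1) * X)).natDegree ≤ n :=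
    natDegree_comp_le.trans (by simpa using hP)
  have h := sum_range_neg_one_pow_mul_choose_mul_eval hQ
  simp only [comp_C_mul_X_coeff, eval_comp, eval_mul, eval_C, eval_X, neg_one_mul] at h
  have hfac : ∀ k : ℕ, (k ! : K) ≠ 0 := fun k => Nat.cast_ne_zero.2 k.factorial_ne_zero
  have hsign : (-1 : K) ^ n * (-1) ^ n = 1 := by rw [← mul_pow]; simp
  calc ∑ j ∈ range (n + 1), (-1 : K) ^ j / (j ! * (n - j)!) * P.eval (-(j : K))
      = (-1) ^ n / n ! * ∑ j ∈ range (n + 1), (-1) ^ (n - j) * n.choose j * P.eval (-(j : K)) := by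
        rw [mul_sum]
        refine sum_congr rfl fun j hj => ?_
        obtain ⟨m, rfl⟩ := Nat.exists_eq_add_of_le (Nat.lt_succ_iff.mp (mem_range.mp hj))
        have hsq : (-1 : K) ^ m * (-1) ^ m = 1 := by rw [← mul_pow]; simp
        rw [Nat.add_sub_cancel_left, Nat.cast_choose K (Nat.le_add_right j m),
          Nat.add_sub_cancel_left, pow_add]
        field_simp [hfac]
        linear_combination -P.eval (-(j : K)) * hsq
    _ = P.coeff n := by
        rw [h]
        field_simp [hfac]
        linear_combination P.coeff n * hsign

section HasseDeriv

variable {R : Type*} [Semiring R] {P : R[X]} {a b n : ℕ}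

theorem natDegree_hasseDeriv_le_of_add_eq (hab : a + b = n) (hP : P.natDegree ≤ n) :
    (hasseDeriv a P).natDegree ≤ b :=
  (natDegree_hasseDeriv_le P a).trans (by omega)

theorem natDegree_hasseDeriv_mul_hasseDeriv_le (hab : a + b = n) (hP : P.natDegree ≤ n) :
    (hasseDeriv a P * hasseDeriv b P).natDegree ≤ n :=
  (natDegree_mul_le_of_le (natDegree_hasseDeriv_le_of_add_eq hab hP)
    (natDegree_hasseDeriv_le_of_add_eq (add_comm b a ▸ hab) hP)).trans_eq (by omega)

theorem coeff_hasseDeriv_mul_hasseDeriv (hab : a + b = n) (hP : P.natDegree ≤ n) :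
    (hasseDeriv a P * hasseDeriv b P).coeff n = n.choose a * n.choose b * P.coeff n ^ 2 := by
  have h := coeff_mul_add_eq_of_natDegree_le (natDegree_hasseDeriv_le_of_add_eq hab hP)
    (natDegree_hasseDeriv_le_of_add_eq (add_comm b a ▸ hab) hP)
  rw [add_comm b a, hab] at h
  rw [h, hasseDeriv_coeff, hasseDeriv_coeff, add_comm b a, hab, mul_assoc,
    ← mul_assoc (P.coeff n), ← Nat.cast_comm]
  simp only [mul_assoc, sq]

end HasseDeriv

theorem coeff_map_comp_C_mul_X_sub_C {R S : Type*} [CommRing R] [CommRing S] (f : R →+* S)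
    (P : R[X]) (r : S) (s : R) (a : ℕ) :
    ((P.map f).comp (C r * X - C (f s))).coeff a = f ((hasseDeriv a P).eval (-s)) * r ^ a := by
  have h : C r * X - C (f s) = (X + C (f (-s))).comp (C r * X) := by simp [sub_eq_add_neg]
  rw [h, ← comp_assoc, ← taylor_apply, ← map_taylor, comp_C_mul_X_coeff, coeff_map, taylor_coeff]

end Polynomial

/-- `B_ℓ(N, cN)` as a polynomial in `N` with coefficients in `ℚ[c]`
(outer variable `X` is `N`, inner variable is `c`):
`B_ℓ(N,M) = ∑_{j=0}^{ℓ} (-1)^j (N-j)_ℓ (M-j)_ℓ / (j!(ℓ-j)!)` with `M = cN`. -/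
noncomputable def BPolyOf {K : Type*} [Field K] (P : K[X]) (n : ℕ) : K[X][X] :=
  ∑ j ∈ range (n + 1), C (C ((-1 : K) ^ j / (j ! * (n - j)!))) *
    (P.map C).comp (X - C (C (j : K))) * (P.map C).comp (C X * X - C (C (j : K)))

theorem BPoly_eq_BPolyOf (ℓ : ℕ) : BPoly ℓ = BPolyOf (ascPochhammer ℚ ℓ) ℓ := by
  have heval (q : ℚ[X][X]) :
      (ascPochhammer ℚ[X][X] ℓ).eval q = ((ascPochhammer ℚ ℓ).map C).comp q := by
    rw [ascPochhammer_map, comp, ← ascPochhammer_eval₂]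
  simp only [BPoly, BPolyOf, heval]

theorem coeff_BPolyOf {K : Type*} [Field K] [CharZero K] {P : K[X]} {n : ℕ}
    (hP : P.natDegree ≤ n) :
    (BPolyOf P n).coeff n = ∑ b ∈ range (n + 1), C (P.coeff n ^ 2 * n.choose b ^ 2) * X ^ b := by
  have hterm (j : K) :
      ((P.map C).comp (X - C (C j)) * (P.map C).comp (C X * X - C (C j))).coeff n
        = ∑ x ∈ antidiagonal n, C ((hasseDeriv x.1 P * hasseDeriv x.2 P).eval (-j)) * X ^ x.2 := by
    have h1 : (X : K[X][X]) - C (C j) = C 1 * X - C (C j) := by rw [C_1, one_mul]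
    rw [h1, coeff_mul]
    refine sum_congr rfl fun x _ => ?_
    simp only [coeff_map_comp_C_mul_X_sub_C, one_pow, mul_one, eval_mul, map_mul, mul_assoc]
  have hdiff : ∀ x ∈ antidiagonal n, ∑ j ∈ range (n + 1), (-1 : K) ^ j / (j ! * (n - j)!) *
      (hasseDeriv x.1 P * hasseDeriv x.2 P).eval (-(j : K)) = P.coeff n ^ 2 * n.choose x.2 ^ 2 := by
    rintro ⟨a, b⟩ hab
    rw [Finset.HasAntidiagonal.mem_antidiagonal] at hab
    rw [sum_range_neg_one_pow_div_factorial_mul_eval_neg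
      (natDegree_hasseDeriv_mul_hasseDeriv_le hab hP), coeff_hasseDeriv_mul_hasseDeriv hab hP,
      Nat.choose_symm_of_eq_add hab.symm]
    ring
  simp only [BPolyOf, finsetSum_coeff, mul_assoc, coeff_C_mul, hterm, mul_sum]
  rw [sum_comm]
  simp only [← mul_assoc, ← C_mul, ← sum_mul, ← map_sum]
  rw [sum_congr rfl fun x hx => by rw [hdiff x hx], ← Nat.sum_antidiagonal_swap,
    Nat.sum_antidiagonal_eq_sum_range_succ_mk]
  rfl

/-- The coefficient of `N^ℓ` in `B_ℓ(N,cN)` is `∑_{b=0}^ℓ C(ℓ,b)² c^b`. -/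
theorem BPoly_leading_coeff (ℓ : ℕ) :
    (BPoly ℓ).coeff ℓ
      = ∑ b ∈ range (ℓ + 1), C ((ℓ.choose b : ℚ) ^ 2) * X ^ b := by
  have hdeg := ascPochhammer_natDegree ℚ ℓ
  have hlead : (ascPochhammer ℚ ℓ).coeff ℓ = 1 := by
    simpa only [hdeg] using (monic_ascPochhammer ℚ ℓ).coeff_natDegree
  rw [BPoly_eq_BPolyOf, coeff_BPolyOf hdeg.le, hlead]
  simp only [one_pow, one_mul]
end
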